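/- arXiv:2602.16096 — 2 statements merged into one kernel-verified Lean document; each statement's English description precedes it below -/
import Mathlib

section
/- Let α, x, q be real numbers and n, r natural numbers. Then Σ_{k=0}^{n} L^{(α+k)}_{r}(x) C(n,k) (1-q)^k q^{n-k} = Σ_{j=0}^{min(n,r)} (-1)^j C(n,j) L^{(α+n)}_{r-j}(x) q^j, adopting the convention that L^{(β)}_{r-j} = 0 when j > r. -/
/-!
Write `ℓ_j(β) = L^{(β)}_{r-j}` (zero for `j > r`). The Pascal-type recurrence
`L^{(β+1)}_{m+1} = L^{(β)}_{m+1} + L^{(β+1)}_m` says that on the family `ℓ` the parameter shift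
`E : β ↦ β + 1` satisfies `E⁻¹ = 1 - S`, where `S : j ↦ j + 1`. Hence the left-hand side is
`((1 - q) + q (1 - S))^n = (1 - q S)^n` applied to `ℓ(α + n)`, read off at `j = 0`. Concretely
this is an induction on `n`, splitting both sides by Pascal's rule.
-/

open Finset

/-- Generalized binomial coefficient `t(t-1)⋯(t-s+1)/s!` of a real `t`. -/
noncomputable def rchoose (t : ℝ) (s : ℕ) : ℝ :=
  (∏ i ∈ range s, (t - (i : ℝ))) / (s.factorial : ℝ)

/-- Generalized Laguerre polynomial `L^{(β)}_m(x)`. -/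
noncomputable def genLaguerre (β : ℝ) (m : ℕ) (x : ℝ) : ℝ :=
  ∑ i ∈ range (m + 1), ((-1 : ℝ) ^ i / (i.factorial : ℝ)) * rchoose ((m : ℝ) + β) (m - i) * x ^ i

theorem sum_bernoulli_mul_eq_of_recurrence {R : Type*} [CommRing R] (q : R) (n : ℕ)
    (g : ℕ → ℕ → R) (hg : ∀ j k, g j (k + 1) = g j k + g (j + 1) (k + 1)) :
    ∑ k ∈ range (n + 1), (n.choose k : R) * ((1 - q) ^ k * q ^ (n - k) * g 0 k) =
      ∑ j ∈ range (n + 1), (n.choose j : R) * ((-q) ^ j * g j n) := by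
  induction n generalizing g with
  | zero => simp
  | succ n ih =>
    have ih' := ih (fun j k => g j (k + 1)) fun j k => hg j (k + 1)
    calc ∑ k ∈ range (n + 2), ((n + 1).choose k : R) * ((1 - q) ^ k * q ^ (n + 1 - k) * g 0 k)
        = q * ∑ k ∈ range (n + 1), (n.choose k : R) * ((1 - q) ^ k * q ^ (n - k) * g 0 k) +
            (1 - q) * ∑ k ∈ range (n + 1),
              (n.choose k : R) * ((1 - q) ^ k * q ^ (n - k) * g 0 (k + 1)) := by
          rw [sum_choose_succ_mul (fun i j => (1 - q) ^ i * q ^ j * g 0 i), mul_sum, mul_sum]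
          congr 1 <;> refine sum_congr rfl fun k hk => ?_
          · rw [Nat.sub_add_comm (mem_range_succ_iff.mp hk)]
            ring
          · ring
      _ = ∑ j ∈ range (n + 1),
            (n.choose j : R) * ((-q) ^ j * (q * g j n + (1 - q) * g j (n + 1))) := by
          rw [ih g hg, ih', mul_sum, mul_sum, ← sum_add_distrib]
          exact sum_congr rfl fun j _ => by ring
      _ = ∑ j ∈ range (n + 2), ((n + 1).choose j : R) * ((-q) ^ j * g j (n + 1)) := by
          rw [sum_choose_succ_mul (fun i _ => (-q) ^ i * g i (n + 1)), ← sum_add_distrib]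
          exact sum_congr rfl fun j _ => by
            linear_combination -(n.choose j : R) * (-q) ^ j * q * hg j n

theorem rchoose_eq_ringChoose (t : ℝ) (s : ℕ) : rchoose t s = Ring.choose t s := by
  rw [Ring.choose_eq_smul, rchoose, ← descPochhammer_eval_eq_prod_range, smul_eq_mul,
    ← Polynomial.aeval_eq_smeval, Polynomial.aeval_def, ← Polynomial.eval_map,
    descPochhammer_map, inv_mul_eq_div]

theorem rchoose_zero_right (t : ℝ) : rchoose t 0 = 1 := by
  simp [rchoose]

theorem rchoose_succ_succ (t : ℝ) (s : ℕ) :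
    rchoose (t + 1) (s + 1) = rchoose t s + rchoose t (s + 1) := by
  simp only [rchoose_eq_ringChoose, Ring.choose_succ_succ]

theorem genLaguerre_zero (β x : ℝ) : genLaguerre β 0 x = 1 := by
  simp [genLaguerre, rchoose_zero_right]

theorem genLaguerre_add_one_succ (β : ℝ) (m : ℕ) (x : ℝ) :
    genLaguerre (β + 1) (m + 1) x = genLaguerre β (m + 1) x + genLaguerre (β + 1) m x := by
  rw [genLaguerre, genLaguerre, genLaguerre, sum_range_succ _ (m + 1), sum_range_succ _ (m + 1),
    Nat.sub_self, rchoose_zero_right, rchoose_zero_right, add_right_comm, ← sum_add_distrib]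
  congr 1
  refine sum_congr rfl fun i hi => ?_
  obtain ⟨d, rfl⟩ := Nat.exists_eq_add_of_le (mem_range_succ_iff.mp hi)
  have hβ : ((i + d + 1 : ℕ) : ℝ) + (β + 1) = ((i + d + 1 : ℕ) : ℝ) + β + 1 := by ring
  have hβ' : ((i + d : ℕ) : ℝ) + (β + 1) = ((i + d + 1 : ℕ) : ℝ) + β := by push_cast; ring
  rw [hβ, hβ', show i + d + 1 - i = d + 1 by omega, show i + d - i = d by omega,
    rchoose_succ_succ]
  ring

noncomputable def genLaguerreSub (β : ℝ) (r j : ℕ) (x : ℝ) : ℝ :=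
  if j ≤ r then genLaguerre β (r - j) x else 0

theorem genLaguerreSub_add_one (β : ℝ) (r j : ℕ) (x : ℝ) :
    genLaguerreSub (β + 1) r j x = genLaguerreSub β r j x + genLaguerreSub (β + 1) r (j + 1) x := by
  unfold genLaguerreSub
  rcases lt_trichotomy j r with h | rfl | h
  · rw [if_pos h.le, if_pos h.le, if_pos (Nat.succ_le_of_lt h),
      show r - j = r - (j + 1) + 1 by omega, genLaguerre_add_one_succ]
  · simp [genLaguerre_zero]
  · simp [h.not_ge, (h.trans (Nat.lt_succ_self j)).not_ge]

theorem laguerre_parameter_bernoulli_transform (α x q : ℝ) (n r : ℕ) :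
    ∑ k ∈ range (n + 1), genLaguerre (α + (k : ℝ)) r x * (n.choose k : ℝ) * (1 - q) ^ k * q ^ (n - k) =
      ∑ j ∈ range (min n r + 1),
        (-1 : ℝ) ^ j * (n.choose j : ℝ) * genLaguerre (α + (n : ℝ)) (r - j) x * q ^ j := by
  have hrec (j k : ℕ) : genLaguerreSub (α + (k + 1 : ℕ)) r j x =
      genLaguerreSub (α + k) r j x + genLaguerreSub (α + (k + 1 : ℕ)) r (j + 1) x := by
    rw [Nat.cast_succ, ← add_assoc, genLaguerreSub_add_one]
  calc _ = ∑ k ∈ range (n + 1),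
          (n.choose k : ℝ) * ((1 - q) ^ k * q ^ (n - k) * genLaguerreSub (α + k) r 0 x) :=
        sum_congr rfl fun k _ => by simp only [genLaguerreSub, zero_le, if_true, Nat.sub_zero]; ring
    _ = ∑ j ∈ range (n + 1), (n.choose j : ℝ) * ((-q) ^ j * genLaguerreSub (α + n) r j x) :=
        sum_bernoulli_mul_eq_of_recurrence q n (fun j k => genLaguerreSub (α + k) r j x) hrec
    _ = ∑ j ∈ range (min n r + 1),
          (n.choose j : ℝ) * ((-q) ^ j * genLaguerreSub (α + n) r j x) := by
        refine (sum_subset (range_subset_range.mpr (by omega)) fun j hjn hj => ?_).symm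
        rw [genLaguerreSub, if_neg (by simp only [mem_range] at hjn hj; omega), mul_zero, mul_zero]
    _ = _ := sum_congr rfl fun j hj => by
        rw [genLaguerreSub, if_pos (by simp only [mem_range] at hj; omega), neg_pow]
        ring
end

section
/- Let (B_n(x))_{n≥0} be the single-variable Bell polynomials, determined by B_0(x) = 1 and B_{n+1}(x) = x · Σ_{k=0}^{n} C(n,k) B_k(x). For all real numbers x, q and every natural number n, x · Σ_{k=0}^{n} (-1)^k B_k(x) C(n,k) (1-q)^{n-k} q^{k} = Σ_{j=0}^{n} (-1)^j C(n,j) B_{j+1}(x) q^j. -/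
open Finset

/-! Expanding each `B (j + 1)` by the recurrence and exchanging the two sums, the coefficient of
`B k` becomes `∑ j, C(n,j) C(j,k) (-q)^j`; the identity `C(n,j) C(j,k) = C(n,k) C(n-k,j-k)` and the
binomial theorem collapse it to `C(n,k) (-q)^k (1-q)^(n-k)`. -/

theorem sum_range_choose_mul_choose_mul_pow {R : Type*} [CommRing R] (p : R) {n k : ℕ}
    (hk : k ≤ n) :
    ∑ j ∈ range (n + 1), (n.choose j * j.choose k : R) * p ^ j =
      n.choose k * p ^ k * (1 + p) ^ (n - k) := by
  have hsplit : n + 1 = k + (n - k + 1) := by omega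
  rw [hsplit, sum_range_add, add_comm 1 p, add_pow, mul_sum]
  have hlow : ∀ j ∈ range k, (n.choose j * j.choose k : R) * p ^ j = 0 := fun j hj ↦ by
    rw [Nat.choose_eq_zero_of_lt (mem_range.mp hj), Nat.cast_zero, mul_zero, zero_mul]
  rw [sum_eq_zero hlow, zero_add]
  refine sum_congr rfl fun m _ ↦ ?_
  have hchoose : (n.choose (k + m) * (k + m).choose k : R) = n.choose k * (n - k).choose m := by
    rw [← Nat.cast_mul, Nat.choose_mul (Nat.le_add_right k m), Nat.add_sub_cancel_left,
      Nat.cast_mul]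
  rw [hchoose, pow_add, one_pow]
  ring

theorem sum_choose_mul_pow_mul_sum_choose {R : Type*} [CommRing R] (b : ℕ → R) (p : R) (n : ℕ) :
    ∑ j ∈ range (n + 1), n.choose j * p ^ j * ∑ k ∈ range (j + 1), j.choose k * b k =
      ∑ k ∈ range (n + 1), n.choose k * b k * p ^ k * (1 + p) ^ (n - k) := by
  have hextend : ∀ j ∈ range (n + 1),
      ∑ k ∈ range (j + 1), (j.choose k : R) * b k = ∑ k ∈ range (n + 1), j.choose k * b k :=
    fun j hj ↦ sum_subset (range_subset_range.mpr (mem_range.mp hj)) fun k _ hk ↦ by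
      rw [Nat.choose_eq_zero_of_lt (not_lt.mp (mt mem_range.mpr hk)), Nat.cast_zero, zero_mul]
  simp_rw [sum_congr rfl fun j hj ↦ congrArg _ (hextend j hj), mul_sum]
  rw [sum_comm]
  refine sum_congr rfl fun k hk ↦ ?_
  rw [mul_right_comm _ (b k), mul_right_comm _ (b k), mul_comm _ (b k),
    ← sum_range_choose_mul_choose_mul_pow p (Nat.lt_succ_iff.mp (mem_range.mp hk)), mul_sum]
  exact sum_congr rfl fun j _ ↦ by ring

theorem bell_bernoulli_transform_general (B : ℕ → ℝ → ℝ)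
    (hBrec : ∀ (n : ℕ) (x : ℝ), B (n + 1) x = x * ∑ k ∈ range (n + 1), (n.choose k : ℝ) * B k x)
    (x q : ℝ) (n : ℕ) :
    x * ∑ k ∈ range (n + 1), (-1 : ℝ) ^ k * B k x * (n.choose k : ℝ) * (1 - q) ^ (n - k) * q ^ k =
      ∑ j ∈ range (n + 1), (-1 : ℝ) ^ j * (n.choose j : ℝ) * B (j + 1) x * q ^ j := by
  calc
    _ = x * ∑ k ∈ range (n + 1), n.choose k * B k x * (-q) ^ k * (1 + -q) ^ (n - k) := by
      rw [← sub_eq_add_neg]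
      exact congrArg _ (sum_congr rfl fun k _ ↦ by rw [neg_pow]; ring)
    _ = x * ∑ j ∈ range (n + 1), n.choose j * (-q) ^ j *
          ∑ k ∈ range (j + 1), j.choose k * B k x := by
      rw [sum_choose_mul_pow_mul_sum_choose]
    _ = _ := by
      rw [mul_sum]
      exact sum_congr rfl fun j _ ↦ by rw [hBrec, neg_pow]; ring

theorem bell_bernoulli_transform (B : ℕ → ℝ → ℝ)
    (hB0 : ∀ x : ℝ, B 0 x = 1)
    (hBrec : ∀ (n : ℕ) (x : ℝ), B (n + 1) x = x * ∑ k ∈ range (n + 1), (n.choose k : ℝ) * B k x)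
    (x q : ℝ) (n : ℕ) :
    x * ∑ k ∈ range (n + 1), (-1 : ℝ) ^ k * B k x * (n.choose k : ℝ) * (1 - q) ^ (n - k) * q ^ k =
      ∑ j ∈ range (n + 1), (-1 : ℝ) ^ j * (n.choose j : ℝ) * B (j + 1) x * q ^ j :=
  bell_bernoulli_transform_general B hBrec x q n
end
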